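/- Let H[0], H[1], ... be i.i.d. Poisson with mean λ > 0, τ ≥ 1, Y[r] the UER indicator, and η = λ e^(−λ(2τ−1)). Then for r ≥ τ, m ≥ 1, and 0 < δ < 1, Pr(Y[r] + ... + Y[r+(2τ−1)m−1] ≤ (1−δ)η(2τ−1)m) ≤ e^(−δ²ηm/2). -/

import Mathlib

open MeasureTheory ProbabilityTheory Finset

-- aux A: regrouping a sum over range (n*m)
lemma sum_range_mul_regroup {M : Type*} [AddCommMonoid M] (f : ℕ → M) (n m : ℕ) :
    ∑ k ∈ Finset.range (n * m), f k
      = ∑ j ∈ Finset.range n, ∑ i ∈ Finset.range m, f (j + n * i) := by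
  induction m with
  | zero => simp
  | succ m ih =>
    rw [Nat.mul_succ, Finset.sum_range_add, ih, ← Finset.sum_add_distrib]
    refine Finset.sum_congr rfl fun j hj => ?_
    rw [Finset.sum_range_succ, add_comm (n*m) j]

-- aux B: calculus inequality
lemma chernoff_log_ineq {δ : ℝ} (h0 : 0 < δ) (h1 : δ < 1) :
    δ ^ 2 / 2 ≤ δ + (1 - δ) * Real.log (1 - δ) := by
  set g : ℝ → ℝ := fun x => x + (1 - x) * Real.log (1 - x) - x ^ 2 / 2 with hg
  have key : ∀ x ∈ Set.Icc (0:ℝ) δ, HasDerivAt g (-Real.log (1 - x) - x) x := by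
    intro x hx
    have hx1 : (0:ℝ) < 1 - x := by have := hx.2; linarith
    have h1' : HasDerivAt (fun y : ℝ => 1 - y) (-1) x := by
      simpa using (hasDerivAt_id x).const_sub 1
    have hlog : HasDerivAt (fun y : ℝ => Real.log (1 - y)) (-(1-x)⁻¹) x := by
      exact ((Real.hasDerivAt_log hx1.ne').comp x h1').congr_deriv (by ring)
    have hmul : HasDerivAt (fun y : ℝ => (1 - y) * Real.log (1 - y))
        ((-1) * Real.log (1 - x) + (1 - x) * (-(1-x)⁻¹)) x := h1'.mul hlog
    have hsq : HasDerivAt (fun y : ℝ => y ^ 2 / 2) (x) x := by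
      simpa using (hasDerivAt_pow 2 x).div_const 2
    have := ((hasDerivAt_id x).add hmul).sub hsq
    refine this.congr_deriv ?_
    have hx1' : (1 - x) * (1 - x)⁻¹ = 1 := mul_inv_cancel₀ hx1.ne'
    linear_combination -hx1'
  have hmono : MonotoneOn g (Set.Icc (0:ℝ) δ) := by
    refine monotoneOn_of_deriv_nonneg (convex_Icc _ _) ?_ ?_ ?_
    · exact fun x hx => ((key x hx).differentiableAt).continuousAt.continuousWithinAt
    · intro x hx
      rw [interior_Icc] at hx
      exact ((key x (Set.mem_Icc_of_Ioo hx)).differentiableAt).differentiableWithinAt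
    · intro x hx
      rw [interior_Icc] at hx
      rw [(key x (Set.mem_Icc_of_Ioo hx)).deriv]
      have hx1 : (0:ℝ) < 1 - x := by have := hx.2; linarith
      have := Real.log_le_sub_one_of_pos hx1
      linarith
  have h0g : g 0 = 0 := by simp [hg]
  have := hmono (Set.left_mem_Icc.2 h0.le) (Set.right_mem_Icc.2 h0.le) h0.le
  rw [h0g] at this
  simp only [hg] at this
  linarith

-- aux D: expectation of product of functions measurable wrt disjoint blocks of an
-- independent family factorizes
lemma lintegral_prod_of_blocks {Ω : Type*} [MeasurableSpace Ω] (P : Measure Ω)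
    [IsProbabilityMeasure P]
    (H : ℕ → Ω → ℕ) (hmeas : ∀ b, Measurable (H b))
    (hind : iIndepFun H P)
    (T : ℕ → Finset ℕ) (hT : ∀ i j, i ≠ j → Disjoint (T i) (T j))
    (g : ℕ → Ω → ENNReal)
    (hg : ∀ i, Measurable[⨆ b ∈ (T i : Set ℕ), MeasurableSpace.comap (H b) inferInstance] (g i))
    (s : Finset ℕ) :
    ∫⁻ ω, ∏ i ∈ s, g i ω ∂P = ∏ i ∈ s, ∫⁻ ω, g i ω ∂P := by
  classical
  set m₀ : ℕ → MeasurableSpace Ω := fun b => MeasurableSpace.comap (H b) inferInstance with hm₀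
  have hle : ∀ b, m₀ b ≤ ‹MeasurableSpace Ω› := fun b => (hmeas b).comap_le
  induction s using Finset.induction with
  | empty => simp
  | @insert a s ha ih =>
    have hSdisj : Disjoint (⋃ i ∈ (s : Set ℕ), (T i : Set ℕ)) ((T a : Set ℕ)) := by
      rw [Set.disjoint_left]
      rintro x hx hxa
      simp only [Set.mem_iUnion] at hx
      obtain ⟨i, hi, hxi⟩ := hx
      have hia : i ≠ a := by rintro rfl; exact ha hi
      exact (Finset.disjoint_left.1 (hT i a hia)) hxi hxa
    have hindep : Indep (⨆ b ∈ (⋃ i ∈ (s : Set ℕ), (T i : Set ℕ)), m₀ b)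
        (⨆ b ∈ (T a : Set ℕ), m₀ b) P :=
      indep_iSup_of_disjoint hle hind.iIndep hSdisj
    have hprodmeas : Measurable[⨆ b ∈ (⋃ i ∈ (s : Set ℕ), (T i : Set ℕ)), m₀ b]
        (fun ω => ∏ i ∈ s, g i ω) := by
      letI : MeasurableSpace Ω := ⨆ b ∈ (⋃ i ∈ (s : Set ℕ), (T i : Set ℕ)), m₀ b
      refine Finset.measurable_prod s fun i hi => ?_
      refine (hg i).mono ?_ le_rfl
      refine biSup_mono fun b hb => ?_
      exact Set.mem_biUnion (by exact_mod_cast hi) hb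
    have hIF : IndepFun (fun ω => ∏ i ∈ s, g i ω) (g a) P := by
      have h2 := indep_of_indep_of_le_left hindep hprodmeas.comap_le
      exact indep_of_indep_of_le_right h2 (hg a).comap_le
    have hga : Measurable (g a) := (hg a).mono (by
      refine iSup₂_le fun b _ => hle b) le_rfl
    have hprod : Measurable fun ω => ∏ i ∈ s, g i ω :=
      hprodmeas.mono (iSup₂_le fun b _ => hle b) le_rfl
    simp only [Finset.prod_insert ha]
    rw [← ih]
    have := lintegral_mul_eq_lintegral_mul_lintegral_of_indepFun hprod hga hIF
    calc ∫⁻ ω, g a ω * ∏ i ∈ s, g i ω ∂P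
        = ∫⁻ ω, ((fun ω => ∏ i ∈ s, g i ω) * g a) ω ∂P := by
          congr 1; ext ω; simp [mul_comm]
      _ = (∫⁻ ω, ∏ i ∈ s, g i ω ∂P) * ∫⁻ ω, g a ω ∂P := this
      _ = (∫⁻ ω, g a ω ∂P) * ∫⁻ ω, ∏ i ∈ s, g i ω ∂P := mul_comm _ _

-- the UER event as a finite intersection over the block Ico (k+1-τ) (k+τ)
lemma uer_event_eq {Ω : Type*} (H : ℕ → Ω → ℕ) (τ : ℕ) (hτ : 1 ≤ τ) (k : ℕ) :
    {ω | H k ω = 1 ∧ ∀ r' < k + τ, r' ≠ k → k < r' + τ → H r' ω = 0}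
      = ⋂ b ∈ Finset.Ico (k + 1 - τ) (k + τ),
          {ω | H b ω = if b = k then 1 else 0} := by
  ext ω
  simp only [Set.mem_setOf_eq, Set.mem_iInter, Finset.mem_Ico]
  constructor
  · rintro ⟨h1, h0⟩ b ⟨hb1, hb2⟩
    by_cases hbk : b = k
    · simp [hbk, h1]
    · simp only [hbk, if_false]
      exact h0 b hb2 hbk (by omega)
  · intro h
    constructor
    · have := h k ⟨by omega, by omega⟩
      simpa using this
    · intro r' hr' hne hlt
      have := h r' ⟨by omega, hr'⟩
      simpa [hne] using this

-- probability of the UER event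
lemma uer_event_prob {Ω : Type*} [MeasurableSpace Ω] (P : Measure Ω)
    [IsProbabilityMeasure P]
    (H : ℕ → Ω → ℕ) (hmeas : ∀ b, Measurable (H b))
    (hind : iIndepFun H P)
    (lam : ℝ) (hlam : 0 < lam)
    (hpois : ∀ b n, P {ω | H b ω = n} =
      ENNReal.ofReal (Real.exp (-lam) * lam ^ n / n.factorial))
    (τ : ℕ) (hτ : 1 ≤ τ) (k : ℕ) (hk : τ ≤ k) :
    P {ω | H k ω = 1 ∧ ∀ r' < k + τ, r' ≠ k → k < r' + τ → H r' ω = 0}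
      = ENNReal.ofReal (lam * Real.exp (-lam * (2 * (τ : ℝ) - 1))) := by
  classical
  rw [uer_event_eq H τ hτ k]
  set B := Finset.Ico (k + 1 - τ) (k + τ) with hB
  have hkB : k ∈ B := by simp [hB, Finset.mem_Ico]; omega
  have hcard : B.card = 2 * τ - 1 := by
    rw [hB, Nat.card_Ico]; omega
  have hmeasb : ∀ b ∈ B, MeasurableSet[MeasurableSpace.comap (H b) inferInstance]
      {ω | H b ω = if b = k then 1 else 0} := by
    intro b _
    exact ⟨{if b = k then 1 else 0}, MeasurableSet.of_discrete, rfl⟩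
  rw [hind.meas_biInter hmeasb]
  have hval : ∀ b ∈ B, P {ω | H b ω = if b = k then 1 else 0}
      = if b = k then ENNReal.ofReal (Real.exp (-lam) * lam)
        else ENNReal.ofReal (Real.exp (-lam)) := by
    intro b _
    by_cases hbk : b = k
    · simp only [hbk, if_true]
      rw [hpois]
      norm_num
    · simp only [hbk, if_false]
      rw [hpois]
      norm_num
  rw [Finset.prod_congr rfl hval]
  rw [← Finset.mul_prod_erase B _ hkB]
  simp only [if_pos rfl, if_true]
  have herase : ∀ b ∈ B.erase k, (if b = k then ENNReal.ofReal (Real.exp (-lam) * lam)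
      else ENNReal.ofReal (Real.exp (-lam))) = ENNReal.ofReal (Real.exp (-lam)) := by
    intro b hb
    simp [Finset.ne_of_mem_erase hb]
  rw [Finset.prod_congr rfl herase, Finset.prod_const, Finset.card_erase_of_mem hkB, hcard]
  rw [← ENNReal.ofReal_pow (Real.exp_pos _).le, ← ENNReal.ofReal_mul
    (by positivity)]
  congr 1
  rw [← Real.exp_nat_mul]
  have hcast : ((2 * τ - 1 - 1 : ℕ) : ℝ) = 2 * (τ : ℝ) - 2 := by
    have : (2 * τ - 1 - 1 : ℕ) = 2 * (τ - 1) := by omega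
    rw [this]
    push_cast [Nat.cast_sub hτ]
    ring
  rw [hcast]
  rw [show (2 * (τ:ℝ) - 2) * -lam = -lam * (2 * (τ:ℝ) - 2) by ring]
  rw [mul_comm (Real.exp (-lam)) lam, mul_assoc, ← Real.exp_add]
  ring_nf

-- block disjointness helper
lemma block_disjoint (τ u u' : ℕ) (h : u + (2 * τ - 1) ≤ u') (hτ : 1 ≤ τ) :
    Disjoint (Finset.Ico (u + 1 - τ) (u + τ)) (Finset.Ico (u' + 1 - τ) (u' + τ)) := by
  rw [Finset.disjoint_left]
  intro x hx hx'
  rw [Finset.mem_Ico] at hx hx'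
  omega

/-- Chernoff-type lower-tail bound on the number of uniquely effective rounds
in a window of `(2τ−1)m` consecutive rounds starting from a round `r ≥ τ`. -/
theorem uniquely_effective_round_chernoff {Ω : Type*} [MeasurableSpace Ω]
    (P : Measure Ω) [IsProbabilityMeasure P]
    (H : ℕ → Ω → ℕ) (hmeas : ∀ r, Measurable (H r))
    (hind : iIndepFun H P)
    (lam : ℝ) (hlam : 0 < lam)
    (hpois : ∀ r k, P {ω | H r ω = k} =
      ENNReal.ofReal (Real.exp (-lam) * lam ^ k / k.factorial))
    (τ : ℕ) (hτ : 1 ≤ τ)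
    (Y : ℕ → Ω → ℝ)
    (hY : ∀ r ω, Y r ω =
      if (H r ω = 1 ∧ ∀ r' < r + τ, r' ≠ r → r < r' + τ → H r' ω = 0)
      then 1 else 0)
    (η : ℝ) (hη : η = lam * Real.exp (-lam * (2 * (τ : ℝ) - 1)))
    (r m : ℕ) (hr : τ ≤ r) (hm : 1 ≤ m)
    (δ : ℝ) (hδ0 : 0 < δ) (hδ1 : δ < 1) :
    (P {ω | ∑ i ∈ Finset.range ((2 * τ - 1) * m), Y (r + i) ω ≤
        (1 - δ) * η * ((2 * τ - 1) * m : ℕ)}).toReal ≤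
      Real.exp (-δ ^ 2 * η * m / 2) := by
  classical
  -- abbreviations
  set n : ℕ := 2 * τ - 1 with hn
  have hn1 : 1 ≤ n := by omega
  have hnR : ((n : ℕ) : ℝ) = 2 * (τ : ℝ) - 1 := by
    rw [hn]; push_cast [Nat.cast_sub (by omega : 1 ≤ 2 * τ)]; ring
  have hτR : (1 : ℝ) ≤ (τ : ℝ) := by exact_mod_cast hτ
  have hnpos : (0 : ℝ) < (n : ℝ) := by rw [hnR]; linarith
  set N : ℕ := n * m with hN
  -- basic facts about η
  have hη0 : 0 < η := by rw [hη]; positivity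
  have hη1 : η ≤ 1 := by
    rw [hη]
    have harg : -lam * (2 * (τ : ℝ) - 1) ≤ -lam := by nlinarith
    have h1 : lam * Real.exp (-lam * (2 * (τ : ℝ) - 1)) ≤ lam * Real.exp (-lam) :=
      mul_le_mul_of_nonneg_left (Real.exp_le_exp.2 harg) hlam.le
    have h2 : lam * Real.exp (-lam) ≤ 1 := by
      have h3 : Real.exp (-lam) * Real.exp lam = 1 := by
        rw [← Real.exp_add]; simp
      have h4 := Real.add_one_le_exp lam
      have h5 := (Real.exp_pos (-lam)).le
      nlinarith [mul_le_mul_of_nonneg_left h4 h5]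
    linarith
  have hηδ1 : 0 < 1 - η * δ := by nlinarith
  have hηδ0 : 0 ≤ 1 - η * δ := hηδ1.le
  -- the constant c
  set c : ℝ := -Real.log (1 - δ) with hc
  have hc0 : 0 < c := by
    rw [hc]
    have := Real.log_neg (x := 1 - δ) (by linarith) (by linarith)
    linarith
  have hcexp : Real.exp (-c) = 1 - δ := by
    rw [hc, neg_neg, Real.exp_log (by linarith)]
  -- the events and their probabilities
  set A : ℕ → Set Ω := fun k =>
    {ω | H k ω = 1 ∧ ∀ r' < k + τ, r' ≠ k → k < r' + τ → H r' ω = 0} with hA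
  set B : ℕ → Finset ℕ := fun k => Finset.Ico (k + 1 - τ) (k + τ) with hB
  set M : ℕ → MeasurableSpace Ω := fun k =>
    ⨆ b ∈ ((B k : Finset ℕ) : Set ℕ), MeasurableSpace.comap (H b) inferInstance with hM
  have hMle : ∀ k, M k ≤ ‹MeasurableSpace Ω› := fun k =>
    iSup₂_le fun b _ => (hmeas b).comap_le
  have hAM : ∀ k, MeasurableSet[M k] (A k) := by
    intro k
    rw [hA]
    simp only
    rw [uer_event_eq H τ hτ k]
    refine MeasurableSet.biInter ((B k).countable_toSet) fun b hb => ?_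
    have h1 : MeasurableSet[MeasurableSpace.comap (H b) inferInstance]
        {ω | H b ω = if b = k then 1 else 0} :=
      ⟨{if b = k then 1 else 0}, MeasurableSet.of_discrete, rfl⟩
    have h2 : MeasurableSpace.comap (H b) inferInstance ≤ M k := by
      rw [hM]
      exact le_iSup₂ (f := fun b (_ : b ∈ ((B k : Finset ℕ) : Set ℕ)) =>
        MeasurableSpace.comap (H b) inferInstance) b hb
    exact h2 _ h1
  have hAmeas : ∀ k, MeasurableSet (A k) := fun k => hMle k _ (hAM k)
  have hYA : ∀ k ω, Y k ω = if ω ∈ A k then 1 else 0 := by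
    intro k ω; rw [hY]; rfl
  have hYind : ∀ k, Y k = (A k).indicator (fun _ => (1 : ℝ)) := by
    intro k; funext ω; rw [hYA, Set.indicator_apply]
  have hYM : ∀ k, Measurable[M k] (Y k) := by
    intro k; rw [hYind]
    exact Measurable.indicator measurable_const (hAM k)
  have hYmeas : ∀ k, Measurable (Y k) := fun k => (hYM k).mono (hMle k) le_rfl
  have hPA : ∀ k, τ ≤ k → P (A k) = ENNReal.ofReal η := by
    intro k hk
    rw [hA, hη]
    exact uer_event_prob P H hmeas hind lam hlam hpois τ hτ k hk
  -- per-round Laplace transform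
  have hreal : Measurable fun x : ℝ => ENNReal.ofReal (Real.exp (-c * x)) :=
    ENNReal.measurable_ofReal.comp (Real.measurable_exp.comp (measurable_const.mul measurable_id))
  have hG : ∀ k, τ ≤ k →
      ∫⁻ ω, ENNReal.ofReal (Real.exp (-c * Y k ω)) ∂P = ENNReal.ofReal (1 - η * δ) := by
    intro k hk
    have hfun : (fun ω => ENNReal.ofReal (Real.exp (-c * Y k ω)))
        = fun ω => (A k).indicator (fun _ => ENNReal.ofReal (1 - δ)) ω
            + ((A k)ᶜ).indicator (fun _ => (1 : ENNReal)) ω := by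
      funext ω
      by_cases hω : ω ∈ A k
      · rw [hYA k ω, if_pos hω, Set.indicator_of_mem hω,
          Set.indicator_of_notMem (by simpa using hω)]
        rw [mul_one, hcexp, add_zero]
      · rw [hYA k ω, if_neg hω, Set.indicator_of_notMem hω,
          Set.indicator_of_mem (by simpa using hω)]
        simp
    rw [hfun, lintegral_add_left ((measurable_const).indicator (hAmeas k))]
    rw [lintegral_indicator_const (hAmeas k), lintegral_indicator_const (hAmeas k).compl]
    rw [hPA k hk, measure_compl (hAmeas k) (measure_ne_top _ _), hPA k hk, measure_univ]
    rw [one_mul, ← ENNReal.ofReal_one, ← ENNReal.ofReal_sub _ (by positivity),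
      ← ENNReal.ofReal_mul (by linarith), ← ENNReal.ofReal_add
        (by nlinarith) (by linarith)]
    congr 1
    ring
  -- block product
  have hF : ∀ j, ∫⁻ ω, ENNReal.ofReal
        (Real.exp (-c * ∑ i ∈ Finset.range m, Y (r + j + n * i) ω)) ∂P
      = ENNReal.ofReal (1 - η * δ) ^ m := by
    intro j
    have hpt : (fun ω => ENNReal.ofReal
          (Real.exp (-c * ∑ i ∈ Finset.range m, Y (r + j + n * i) ω)))
        = fun ω => ∏ i ∈ Finset.range m,
            (fun ω => ENNReal.ofReal (Real.exp (-c * Y (r + j + n * i) ω))) ω := by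
      funext ω
      rw [Finset.mul_sum, Real.exp_sum, ENNReal.ofReal_prod_of_nonneg
        (fun i _ => (Real.exp_pos _).le)]
    rw [hpt]
    have hTdisj : ∀ i i' : ℕ, i ≠ i' →
        Disjoint (B (r + j + n * i)) (B (r + j + n * i')) := by
      have key : ∀ i i' : ℕ, i < i' →
          Disjoint (B (r + j + n * i)) (B (r + j + n * i')) := by
        intro i i' hii
        rw [hB]
        apply block_disjoint τ _ _ _ hτ
        have h1 : n * i + n ≤ n * i' := by
          have := Nat.mul_le_mul_left n (Nat.succ_le_of_lt hii)
          simpa [Nat.mul_succ] using this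
        omega
      intro i i' hii
      rcases lt_or_gt_of_ne hii with h | h
      · exact key i i' h
      · exact (key i' i h).symm
    rw [lintegral_prod_of_blocks P H hmeas hind (fun i => B (r + j + n * i)) hTdisj
      (fun i ω => ENNReal.ofReal (Real.exp (-c * Y (r + j + n * i) ω)))
      (fun i => by exact hreal.comp (hYM (r + j + n * i))) (Finset.range m)]
    rw [Finset.prod_congr rfl (fun i _ => hG (r + j + n * i) (by omega)),
      Finset.prod_const, Finset.card_range]
  -- Markov's inequality
  set W : Ω → ℝ := fun ω => ∑ i ∈ Finset.range N, Y (r + i) ω with hW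
  set f : Ω → ENNReal := fun ω => ENNReal.ofReal (Real.exp (-(c / n) * W ω)) with hf
  set E : Set Ω := {ω | W ω ≤ (1 - δ) * η * (N : ℕ)} with hE
  set ε : ENNReal := ENNReal.ofReal (Real.exp (-(c / n) * ((1 - δ) * η * (N : ℕ)))) with hε
  have hWmeas : Measurable W := by
    rw [hW]; exact Finset.measurable_sum _ fun i _ => hYmeas (r + i)
  have hfmeas : Measurable f := by
    rw [hf]
    exact ENNReal.measurable_ofReal.comp
      (Real.measurable_exp.comp (measurable_const.mul hWmeas))
  have hcn : 0 ≤ c / (n : ℝ) := div_nonneg hc0.le hnpos.le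
  have hmarkov : ε * P E ≤ ∫⁻ ω, f ω ∂P := by
    have hsub : E ⊆ {ω | ε ≤ f ω} := by
      intro ω hω
      rw [hE, Set.mem_setOf_eq] at hω
      rw [Set.mem_setOf_eq, hε, hf]
      apply ENNReal.ofReal_le_ofReal
      apply Real.exp_le_exp.2
      rw [neg_mul, neg_mul, neg_le_neg_iff]
      exact mul_le_mul_of_nonneg_left hω hcn
    calc ε * P E ≤ ε * P {ω | ε ≤ f ω} :=
          mul_le_mul_right (measure_mono hsub) ε
      _ ≤ ∫⁻ ω, f ω ∂P := mul_meas_ge_le_lintegral₀ hfmeas.aemeasurable ε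
  -- Hölder step
  set F : ℕ → Ω → ENNReal := fun j ω => ENNReal.ofReal
    (Real.exp (-c * ∑ i ∈ Finset.range m, Y (r + j + n * i) ω)) with hFdef
  have hWsplit : ∀ ω, W ω = ∑ j ∈ Finset.range n, ∑ i ∈ Finset.range m,
      Y (r + j + n * i) ω := by
    intro ω
    calc W ω = ∑ k ∈ Finset.range (n * m), Y (r + k) ω := rfl
      _ = ∑ j ∈ Finset.range n, ∑ i ∈ Finset.range m, Y (r + (j + n * i)) ω :=
          sum_range_mul_regroup (fun k => Y (r + k) ω) n m
      _ = _ := Finset.sum_congr rfl fun j _ => Finset.sum_congr rfl fun i _ => by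
          rw [← add_assoc]
  have hpoint : ∀ ω, f ω = ∏ j ∈ Finset.range n, (F j ω) ^ ((1 : ℝ) / n) := by
    intro ω
    have h1 : ∀ j, (F j ω) ^ ((1 : ℝ) / n)
        = ENNReal.ofReal (Real.exp (-(c / n) *
            ∑ i ∈ Finset.range m, Y (r + j + n * i) ω)) := by
      intro j
      show (ENNReal.ofReal (Real.exp (-c * ∑ i ∈ Finset.range m, Y (r + j + n * i) ω)))
          ^ ((1 : ℝ) / n) = _
      rw [ENNReal.ofReal_rpow_of_pos (Real.exp_pos _), ← Real.exp_mul]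
      congr 2
      field_simp
    show ENNReal.ofReal (Real.exp (-(c / ↑n) * W ω)) = _
    rw [Finset.prod_congr rfl fun j _ => h1 j,
      ← ENNReal.ofReal_prod_of_nonneg (fun j _ => (Real.exp_pos _).le),
      ← Real.exp_sum]
    congr 2
    rw [hWsplit ω, Finset.mul_sum]
  have hHolder : ∫⁻ ω, f ω ∂P ≤ ∏ j ∈ Finset.range n,
      (∫⁻ ω, F j ω ∂P) ^ ((1 : ℝ) / n) := by
    have := ENNReal.lintegral_prod_norm_pow_le (μ := P) (Finset.range n)
      (f := F)
      (fun j _ => ((hreal.comp (Finset.measurable_sum _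
        fun i _ => hYmeas (r + j + n * i)))).aemeasurable)
      (p := fun _ => (1 : ℝ) / n)
      (by rw [Finset.sum_const, Finset.card_range, nsmul_eq_mul]; field_simp)
      (fun j _ => by positivity)
    calc ∫⁻ ω, f ω ∂P = ∫⁻ ω, ∏ j ∈ Finset.range n, (F j ω) ^ ((1 : ℝ) / n) ∂P := by
          congr 1; funext ω; exact hpoint ω
      _ ≤ _ := this
  have hFval : ∀ j ∈ Finset.range n, (∫⁻ ω, F j ω ∂P) ^ ((1 : ℝ) / n)
      = (ENNReal.ofReal (1 - η * δ) ^ m) ^ ((1 : ℝ) / n) := by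
    intro j _
    congr 1
    exact hF j
  have hprodval : ∏ j ∈ Finset.range n,
      (ENNReal.ofReal (1 - η * δ) ^ m) ^ ((1 : ℝ) / n)
      = ENNReal.ofReal (1 - η * δ) ^ m := by
    rw [Finset.prod_const, Finset.card_range, ← ENNReal.rpow_natCast
      ((ENNReal.ofReal (1 - η * δ) ^ m) ^ ((1 : ℝ) / n)) n, ← ENNReal.rpow_mul]
    rw [show (1 : ℝ) / n * n = 1 by field_simp, ENNReal.rpow_one]
  -- final numeric comparison
  have hNR : ((N : ℕ) : ℝ) = (n : ℝ) * m := by rw [hN]; push_cast; ring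
  have hkey : c * (1 - δ) + δ ^ 2 / 2 ≤ δ := by
    have := chernoff_log_ineq hδ0 hδ1
    rw [hc]
    nlinarith
  have hrealineq : (1 - η * δ) ^ m ≤
      Real.exp (-(c / n) * ((1 - δ) * η * (N : ℕ))) * Real.exp (-δ ^ 2 * η * m / 2) := by
    have h1 : (1 - η * δ) ^ m ≤ Real.exp (-(η * δ)) ^ m := by
      apply pow_le_pow_left₀ hηδ0
      have := Real.add_one_le_exp (-(η * δ))
      linarith
    have h2 : Real.exp (-(η * δ)) ^ m = Real.exp ((m : ℝ) * (-(η * δ))) := by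
      rw [Real.exp_nat_mul]
    rw [← Real.exp_add]
    have h3 : -(c / n) * ((1 - δ) * η * (N : ℕ)) = -(c * (1 - δ) * η * m) := by
      rw [hNR]; field_simp
    rw [h3]
    refine h1.trans ?_
    rw [h2]
    apply Real.exp_le_exp.2
    have hmpos : (0 : ℝ) ≤ (m : ℝ) := Nat.cast_nonneg m
    nlinarith [mul_le_mul_of_nonneg_left hkey (mul_nonneg hη0.le hmpos)]
  -- put everything together
  have hchain : ε * P E ≤ ε * ENNReal.ofReal (Real.exp (-δ ^ 2 * η * m / 2)) := by
    calc ε * P E ≤ ∫⁻ ω, f ω ∂P := hmarkov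
      _ ≤ ∏ j ∈ Finset.range n, (∫⁻ ω, F j ω ∂P) ^ ((1 : ℝ) / n) := hHolder
      _ = ENNReal.ofReal (1 - η * δ) ^ m := by
          rw [Finset.prod_congr rfl hFval, hprodval]
      _ = ENNReal.ofReal ((1 - η * δ) ^ m) := by
          rw [ENNReal.ofReal_pow hηδ0]
      _ ≤ ENNReal.ofReal (Real.exp (-(c / n) * ((1 - δ) * η * (N : ℕ)))
            * Real.exp (-δ ^ 2 * η * m / 2)) := ENNReal.ofReal_le_ofReal hrealineq
      _ = ε * ENNReal.ofReal (Real.exp (-δ ^ 2 * η * m / 2)) := by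
          rw [hε, ← ENNReal.ofReal_mul (Real.exp_nonneg _)]
  have hε0 : ε ≠ 0 := by
    rw [hε]
    exact (ENNReal.ofReal_pos.2 (Real.exp_pos _)).ne'
  have hεtop : ε ≠ ⊤ := by rw [hε]; exact ENNReal.ofReal_ne_top
  have hPE : P E ≤ ENNReal.ofReal (Real.exp (-δ ^ 2 * η * m / 2)) :=
    (ENNReal.mul_le_mul_iff_right hε0 hεtop).mp hchain
  exact ENNReal.toReal_le_of_le_ofReal (Real.exp_nonneg _) hPE
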